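/- For every s > p > 1 and every f ∈ L^p(ℝ^d) with f ≥ 0, (∑_Q |Q|^{s/p − s} ‖f‖_{L¹(Q)}^s)^{1/s} ≤ C(s,p,d) ‖f‖_{L^p(ℝ^d)}, where the sum is over all dyadic cubes Q. -/

import Mathlib

open MeasureTheory Real ENNReal NNReal Set Function

noncomputable section

def dyadicCube (d : ℕ) (k : ℤ) (n : Fin d → ℤ) : Set (EuclideanSpace ℝ (Fin d)) :=
  {x | ∀ i : Fin d, (n i : ℝ) * 2 ^ k ≤ x i ∧ x i < ((n i : ℝ) + 1) * 2 ^ k}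

namespace DyadicPf
open scoped Classical

/-- `2 ^ a` in `ℝ≥0∞`, real exponent. -/
def tp (a : ℝ) : ℝ≥0∞ := (2 : ℝ≥0∞) ^ a

lemma tp_ne_zero (a : ℝ) : tp a ≠ 0 := by
  simp [tp, ENNReal.rpow_eq_zero_iff]

lemma tp_ne_top (a : ℝ) : tp a ≠ ∞ := by
  simp [tp, ENNReal.rpow_eq_top_iff]

lemma tp_add (a b : ℝ) : tp (a + b) = tp a * tp b :=
  ENNReal.rpow_add _ _ (by norm_num) (by norm_num)

lemma tp_rpow (a b : ℝ) : tp a ^ b = tp (a * b) := (ENNReal.rpow_mul 2 a b).symm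

lemma tp_lt_tp {a b : ℝ} (h : a < b) : tp a < tp b :=
  ENNReal.rpow_lt_rpow_of_exponent_lt (by norm_num) (by norm_num) h

lemma tp_lt_one {a : ℝ} (h : a < 0) : tp a < 1 :=
  ENNReal.rpow_lt_one_of_one_lt_of_neg (by norm_num) h

lemma tp_mul_tp_neg (a : ℝ) : tp a * tp (-a) = 1 := by
  rw [← tp_add]; simp [tp]

/-- 1D arithmetic core: two half-open dyadic intervals sharing a point are nested. -/
lemma oneD_core {k l n m : ℤ} (hkl : k ≤ l) {y : ℝ}
    (h1 : (n : ℝ) * 2 ^ k ≤ y) (h2 : y < ((n : ℝ) + 1) * 2 ^ k)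
    (h3 : (m : ℝ) * 2 ^ l ≤ y) (h4 : y < ((m : ℝ) + 1) * 2 ^ l) :
    m * 2 ^ (l - k).toNat ≤ n ∧ n < (m + 1) * 2 ^ (l - k).toNat := by
  have h2k : (0 : ℝ) < 2 ^ k := zpow_pos (by norm_num) k
  have hj : (2 : ℝ) ^ l = 2 ^ (l - k).toNat * 2 ^ k := by
    rw [← zpow_natCast (2:ℝ) (l-k).toNat, Int.toNat_of_nonneg (sub_nonneg.2 hkl),
      ← zpow_add₀ (by norm_num : (2:ℝ) ≠ 0)]
    ring_nf
  constructor
  · -- m * 2^j ≤ n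
    have : (m : ℝ) * 2 ^ (l - k).toNat * 2 ^ k < ((n : ℝ) + 1) * 2 ^ k := by
      calc (m : ℝ) * 2 ^ (l - k).toNat * 2 ^ k = (m:ℝ) * 2 ^ l := by rw [hj]; ring
        _ ≤ y := h3
        _ < _ := h2
    have := lt_of_mul_lt_mul_right this h2k.le
    have : (m * 2 ^ (l - k).toNat : ℤ) < n + 1 := by exact_mod_cast this
    omega
  · -- n < (m+1) * 2^j
    have : (n : ℝ) * 2 ^ k < ((m : ℝ) + 1) * 2 ^ (l - k).toNat * 2 ^ k := by
      calc (n:ℝ) * 2 ^ k ≤ y := h1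
        _ < ((m : ℝ) + 1) * 2 ^ l := h4
        _ = _ := by rw [hj]; ring
    have := lt_of_mul_lt_mul_right this h2k.le
    exact_mod_cast this

lemma oneD_sub {k l n m : ℤ} (hkl : k ≤ l)
    (h5 : m * 2 ^ (l - k).toNat ≤ n) (h6 : n < (m + 1) * 2 ^ (l - k).toNat)
    {y : ℝ} (h1 : (n : ℝ) * 2 ^ k ≤ y) (h2 : y < ((n : ℝ) + 1) * 2 ^ k) :
    (m : ℝ) * 2 ^ l ≤ y ∧ y < ((m : ℝ) + 1) * 2 ^ l := by
  have h2k : (0 : ℝ) < 2 ^ k := zpow_pos (by norm_num) k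
  have hj : (2 : ℝ) ^ l = 2 ^ (l - k).toNat * 2 ^ k := by
    rw [← zpow_natCast (2:ℝ) (l-k).toNat, Int.toNat_of_nonneg (sub_nonneg.2 hkl),
      ← zpow_add₀ (by norm_num : (2:ℝ) ≠ 0)]
    ring_nf
  constructor
  · calc (m : ℝ) * 2 ^ l = (m * 2 ^ (l - k).toNat : ℤ) * 2 ^ k := by push_cast; rw [hj]; ring
      _ ≤ (n : ℝ) * 2 ^ k := by
        have : ((m * 2 ^ (l - k).toNat : ℤ) : ℝ) ≤ (n : ℝ) := by exact_mod_cast h5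
        exact mul_le_mul_of_nonneg_right this h2k.le
      _ ≤ y := h1
  · have h6' : ((n : ℝ) + 1) ≤ ((m + 1) * 2 ^ (l - k).toNat : ℤ) := by exact_mod_cast h6
    calc y < ((n : ℝ) + 1) * 2 ^ k := h2
      _ ≤ ((m + 1) * 2 ^ (l - k).toNat : ℤ) * 2 ^ k :=
        mul_le_mul_of_nonneg_right h6' h2k.le
      _ = ((m : ℝ) + 1) * 2 ^ l := by push_cast; rw [hj]; ring

variable {d : ℕ}

/-- The index type for dyadic cubes. -/
abbrev Idx (d : ℕ) := ℤ × (Fin d → ℤ)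

/-- `Sub b a` : the cube indexed by `b` is contained in the one indexed by `a`. -/
def Sub (b a : Idx d) : Prop :=
  b.1 ≤ a.1 ∧ ∀ i, a.2 i * 2 ^ (a.1 - b.1).toNat ≤ b.2 i ∧
    b.2 i < (a.2 i + 1) * 2 ^ (a.1 - b.1).toNat

lemma mem_cube {x : EuclideanSpace ℝ (Fin d)} {k : ℤ} {n : Fin d → ℤ} :
    x ∈ dyadicCube d k n ↔ ∀ i, (n i : ℝ) * 2 ^ k ≤ x i ∧ x i < ((n i : ℝ) + 1) * 2 ^ k :=
  Iff.rfl

lemma Sub.subset {b a : Idx d} (h : Sub b a) :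
    dyadicCube d b.1 b.2 ⊆ dyadicCube d a.1 a.2 := by
  intro x hx i
  exact oneD_sub h.1 (h.2 i).1 (h.2 i).2 (hx i).1 (hx i).2

lemma sub_of_mem_mem {b a : Idx d} (hkl : b.1 ≤ a.1) {x : EuclideanSpace ℝ (Fin d)}
    (hb : x ∈ dyadicCube d b.1 b.2) (ha : x ∈ dyadicCube d a.1 a.2) : Sub b a :=
  ⟨hkl, fun i => oneD_core hkl (hb i).1 (hb i).2 (ha i).1 (ha i).2⟩

lemma eq_of_mem_mem_same {l : ℤ} {m m' : Fin d → ℤ} {x : EuclideanSpace ℝ (Fin d)}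
    (h : x ∈ dyadicCube d l m) (h' : x ∈ dyadicCube d l m') : m = m' := by
  funext i
  have := oneD_core (le_refl l) (h i).1 (h i).2 (h' i).1 (h' i).2
  simp only [sub_self, Int.toNat_zero, pow_zero, mul_one] at this
  omega

/-- Base point (corner) of a dyadic cube. -/
def basePt (q : Idx d) : EuclideanSpace ℝ (Fin d) :=
  (WithLp.equiv 2 (Fin d → ℝ)).symm (fun i => (q.2 i : ℝ) * 2 ^ q.1)

lemma basePt_apply (q : Idx d) (i : Fin d) : basePt q i = (q.2 i : ℝ) * 2 ^ q.1 :=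
  rfl

lemma basePt_mem (q : Idx d) : basePt q ∈ dyadicCube d q.1 q.2 := by
  intro i
  rw [basePt_apply]
  have h2k : (0 : ℝ) < 2 ^ q.1 := zpow_pos (by norm_num) q.1
  exact ⟨le_refl _, mul_lt_mul_of_pos_right (by linarith) h2k⟩

/-- Ancestor index of a cube at scale `l`. -/
def anc (q : Idx d) (l : ℤ) : Idx d :=
  (l, fun i => ⌊(q.2 i : ℝ) * 2 ^ q.1 / 2 ^ l⌋)

lemma anc_fst (q : Idx d) (l : ℤ) : (anc q l).1 = l := rfl

lemma mem_of_floor {x : EuclideanSpace ℝ (Fin d)} {l : ℤ} {m : Fin d → ℤ}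
    (h : ∀ i, m i = ⌊x i / 2 ^ l⌋) : x ∈ dyadicCube d l m := by
  intro i
  have h2l : (0 : ℝ) < 2 ^ l := zpow_pos (by norm_num) l
  have := Int.floor_le (x i / 2 ^ l)
  have h2 := Int.lt_floor_add_one (x i / 2 ^ l)
  rw [← h i] at this h2
  constructor
  · calc (m i : ℝ) * 2 ^ l ≤ x i / 2 ^ l * 2 ^ l := mul_le_mul_of_nonneg_right this h2l.le
      _ = x i := div_mul_cancel₀ _ h2l.ne'
  · calc x i = x i / 2 ^ l * 2 ^ l := (div_mul_cancel₀ _ h2l.ne').symm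
      _ < ((m i : ℝ) + 1) * 2 ^ l := mul_lt_mul_of_pos_right h2 h2l

lemma floor_of_mem {x : EuclideanSpace ℝ (Fin d)} {l : ℤ} {m : Fin d → ℤ}
    (h : x ∈ dyadicCube d l m) (i : Fin d) : m i = ⌊x i / 2 ^ l⌋ := by
  have h2l : (0 : ℝ) < 2 ^ l := zpow_pos (by norm_num) l
  have h1 := (h i).1
  have h2 := (h i).2
  symm
  rw [Int.floor_eq_iff]
  constructor
  · rw [le_div_iff₀ h2l]; exact h1
  · rw [div_lt_iff₀ h2l]; push_cast; exact h2

lemma basePt_mem_anc (q : Idx d) (l : ℤ) : basePt q ∈ dyadicCube d l (anc q l).2 := by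
  apply mem_of_floor
  intro i
  rw [basePt_apply]
  rfl

lemma anc_self (q : Idx d) : anc q q.1 = q := by
  refine Prod.ext rfl ?_
  funext i
  show ⌊(q.2 i : ℝ) * 2 ^ q.1 / 2 ^ q.1⌋ = q.2 i
  have h2l : (0 : ℝ) < 2 ^ q.1 := zpow_pos (by norm_num) q.1
  rw [mul_div_cancel_right₀ _ h2l.ne', Int.floor_intCast]

lemma anc_eq_of_mem {q : Idx d} {l : ℤ} {m : Fin d → ℤ}
    (h : basePt q ∈ dyadicCube d l m) : anc q l = (l, m) := by
  refine Prod.ext rfl ?_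
  funext i
  show ⌊(q.2 i : ℝ) * 2 ^ q.1 / 2 ^ l⌋ = m i
  rw [← basePt_apply]
  exact (floor_of_mem h i).symm

lemma sub_anc (q : Idx d) {l : ℤ} (h : q.1 ≤ l) : Sub q (anc q l) :=
  sub_of_mem_mem h (basePt_mem q) (basePt_mem_anc q l)

lemma anc_anc (q : Idx d) {l l' : ℤ} (h : l ≤ l') : anc (anc q l) l' = anc q l' := by
  have h1 : basePt (anc q l) ∈ dyadicCube d l (anc q l).2 := basePt_mem (anc q l)
  have h2 : Sub (anc q l) (anc q l') :=
    sub_of_mem_mem h (basePt_mem_anc q l) (basePt_mem_anc q l')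
  have h3 : basePt (anc q l) ∈ dyadicCube d l' (anc q l').2 := h2.subset h1
  exact anc_eq_of_mem h3



/-- helper: sum of r-th powers vs r-th power of sum, r ≥ 1 -/
lemma tsum_rpow_le {ι : Type*} (f : ι → ℝ≥0∞) {r : ℝ} (hr : 1 ≤ r) :
    ∑' i, f i ^ r ≤ (∑' i, f i) ^ r := by
  have hsplit : ∀ x : ℝ≥0∞, x ^ r = x ^ (r - 1) * x := by
    intro x
    rw [show r = (r - 1) + 1 by ring, ENNReal.rpow_add_of_nonneg _ _ (by linarith) zero_le_one,
      ENNReal.rpow_one]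
    ring_nf
  set Sm := ∑' i, f i with hS
  rcases eq_or_ne Sm ∞ with htop | htop
  · rw [htop, ENNReal.top_rpow_of_pos (by linarith : (0:ℝ) < r)]; exact le_top
  calc ∑' i, f i ^ r = ∑' i, f i ^ (r - 1) * f i := tsum_congr fun i => hsplit (f i)
    _ ≤ ∑' i, Sm ^ (r - 1) * f i := by
      refine Summable.tsum_le_tsum (fun i => ?_) ENNReal.summable ENNReal.summable
      exact mul_le_mul_left (ENNReal.rpow_le_rpow (ENNReal.le_tsum i) (by linarith)) _
    _ = Sm ^ (r - 1) * Sm := by rw [ENNReal.tsum_mul_left]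
    _ = Sm ^ r := (hsplit Sm).symm

section MeasureLemmas

variable {α : Type*} [MeasurableSpace α] {μ : Measure α}

/-- Hölder for a set integral. -/
lemma holder_set {p : ℝ} (hp : 1 < p) {F : α → ℝ≥0∞} (hF : Measurable F)
    {Q : Set α} (hQ : MeasurableSet Q) :
    ∫⁻ x in Q, F x ∂μ ≤ (∫⁻ x, F x ^ p ∂μ) ^ (1/p) * (μ Q) ^ (1 - 1/p) := by
  have hpq : p.HolderConjugate (Real.conjExponent p) := Real.HolderConjugate.conjExponent hp
  have h1 : (1 : ℝ) / Real.conjExponent p = 1 - 1/p := by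
    rw [Real.conjExponent]; field_simp
  set g : α → ℝ≥0∞ := Q.indicator (fun _ => 1) with hg
  have hgm : Measurable g := measurable_const.indicator hQ
  have key := ENNReal.lintegral_mul_le_Lp_mul_Lq μ hpq hF.aemeasurable hgm.aemeasurable
  simp only [Pi.mul_apply] at key
  have h2 : ∀ x, F x * g x = Q.indicator F x := by
    intro x
    by_cases hx : x ∈ Q <;> simp [hg, Set.indicator_apply, hx]
  have h3 : ∀ x, g x ^ (Real.conjExponent p) = g x := by
    intro x
    by_cases hx : x ∈ Q <;>
      simp [hg, Set.indicator_apply, hx, ENNReal.zero_rpow_of_pos hpq.symm.pos]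
  calc ∫⁻ x in Q, F x ∂μ = ∫⁻ x, Q.indicator F x ∂μ := (lintegral_indicator hQ F).symm
    _ = ∫⁻ x, F x * g x ∂μ := by simp_rw [h2]
    _ ≤ (∫⁻ x, F x ^ p ∂μ) ^ (1/p) * (∫⁻ x, g x ^ (Real.conjExponent p) ∂μ) ^ (1/Real.conjExponent p) := key
    _ = (∫⁻ x, F x ^ p ∂μ) ^ (1/p) * (μ Q) ^ (1 - 1/p) := by
      simp_rw [h3, hg]
      rw [lintegral_indicator hQ, setLIntegral_one, h1]

/-- Chebyshev. -/
lemma cheb {p : ℝ} (hp : 0 < p) {F : α → ℝ≥0∞} (hF : Measurable F) (T : ℝ≥0∞) :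
    T ^ p * μ {x | T < 2 * F x} ≤ (2:ℝ≥0∞) ^ p * ∫⁻ x, F x ^ p ∂μ := by
  have hm : Measurable fun x => (2 * F x) ^ p :=
    ENNReal.continuous_rpow_const.measurable.comp (hF.const_mul 2)
  calc T ^ p * μ {x | T < 2 * F x} = ∫⁻ _ in {x | T < 2 * F x}, T ^ p ∂μ :=
        (setLIntegral_const _ _).symm
    _ ≤ ∫⁻ x in {x | T < 2 * F x}, (2 * F x) ^ p ∂μ :=
        setLIntegral_mono hm fun x hx => ENNReal.rpow_le_rpow (le_of_lt hx) hp.le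
    _ ≤ ∫⁻ x, (2 * F x) ^ p ∂μ := setLIntegral_le_lintegral _ _
    _ = (2:ℝ≥0∞) ^ p * ∫⁻ x, F x ^ p ∂μ := by
        simp_rw [ENNReal.mul_rpow_of_nonneg _ _ hp.le]
        exact lintegral_const_mul' _ _ (by simp [ENNReal.rpow_eq_top_iff])

end MeasureLemmas

/-- ∫_{(0,b)} t^c dt -/
lemma lintegral_Ioo_rpow {c : ℝ} (hc : -1 < c) {b : ℝ} (hb : 0 ≤ b) :
    ∫⁻ t in Ioo (0:ℝ) b, ENNReal.ofReal (t ^ c) = ENNReal.ofReal (b ^ (c+1) / (c+1)) := by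
  rcases eq_or_lt_of_le hb with hb0 | hb0
  · rw [← hb0]
    simp [Real.zero_rpow (by linarith : c + 1 ≠ 0)]
  have hint : IntegrableOn (fun t : ℝ => t ^ c) (Ioo (0:ℝ) b) :=
    (intervalIntegral.integrableOn_Ioo_rpow_iff hb0).2 hc
  rw [← ofReal_integral_eq_lintegral_ofReal hint]
  · congr 1
    rw [← MeasureTheory.integral_Ioc_eq_integral_Ioo, ← intervalIntegral.integral_of_le hb0.le,
      integral_rpow (Or.inl hc)]
    rw [Real.zero_rpow (by linarith : c + 1 ≠ 0)]
    ring
  · refine (ae_restrict_iff' measurableSet_Ioo).2 (Filter.Eventually.of_forall fun t ht => ?_)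
    exact Real.rpow_nonneg ht.1.le c

/-- single-value layer cake -/
lemma layer {c : ℝ} (hc : -1 < c) {a : ℝ≥0∞} (ha : a ≠ ∞) :
    ∫⁻ t in Ioi (0:ℝ), ({t' : ℝ | ENNReal.ofReal t' < a}.indicator
        (fun t'' => ENNReal.ofReal (t'' ^ c)) t)
      = a ^ (c+1) * ENNReal.ofReal (1/(c+1)) := by
  have hset : MeasurableSet {t' : ℝ | ENNReal.ofReal t' < a} :=
    ENNReal.measurable_ofReal (measurableSet_Iio (a := a))
  rw [lintegral_indicator hset, Measure.restrict_restrict hset]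
  have hseteq : {t' : ℝ | ENNReal.ofReal t' < a} ∩ Ioi 0 = Ioo 0 a.toReal := by
    ext t
    simp only [mem_inter_iff, mem_setOf_eq, mem_Ioi, mem_Ioo]
    constructor
    · rintro ⟨h1, h2⟩
      exact ⟨h2, (ENNReal.ofReal_lt_iff_lt_toReal h2.le ha).1 h1⟩
    · rintro ⟨h1, h2⟩
      exact ⟨(ENNReal.ofReal_lt_iff_lt_toReal h1.le ha).2 h2, h1⟩
  rw [hseteq, lintegral_Ioo_rpow hc ENNReal.toReal_nonneg]
  rcases eq_or_ne a 0 with rfl | ha0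
  · simp [Real.zero_rpow (by linarith : c + 1 ≠ 0), ENNReal.zero_rpow_of_pos (by linarith : (0:ℝ) < c + 1)]
  · rw [div_eq_mul_one_div, ENNReal.ofReal_mul (by positivity)]
    congr 1
    rw [← ENNReal.ofReal_rpow_of_pos (ENNReal.toReal_pos ha0 ha), ENNReal.ofReal_toReal ha]


lemma tp_intCast (k : ℤ) : tp (k : ℝ) = ENNReal.ofReal ((2:ℝ) ^ k) := by
  rw [tp, ← Real.rpow_intCast 2 k, ← ENNReal.ofReal_rpow_of_pos (by norm_num : (0:ℝ) < 2)]
  norm_num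

lemma cube_eq {d : ℕ} (k : ℤ) (n : Fin d → ℤ) :
    dyadicCube d k n = (MeasurableEquiv.toLp 2 (Fin d → ℝ)).symm ⁻¹'
      (Set.univ.pi fun i => Ico ((n i : ℝ) * 2 ^ k) (((n i : ℝ) + 1) * 2 ^ k)) := by
  ext x
  simp only [mem_preimage, Set.mem_univ_pi, mem_Ico]
  exact Iff.rfl

lemma measurableSet_cube {d : ℕ} (k : ℤ) (n : Fin d → ℤ) :
    MeasurableSet (dyadicCube d k n) := by
  rw [cube_eq]
  exact (MeasurableSet.univ_pi fun i => measurableSet_Ico).preimage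
    (MeasurableEquiv.toLp 2 (Fin d → ℝ)).symm.measurable

lemma volume_cube {d : ℕ} (k : ℤ) (n : Fin d → ℤ) :
    volume (dyadicCube d k n) = tp ((k : ℝ) * d) := by
  rw [cube_eq, (EuclideanSpace.volume_preserving_symm_measurableEquiv_toLp (Fin d)).measure_preimage
    (MeasurableSet.univ_pi fun i => measurableSet_Ico).nullMeasurableSet]
  rw [volume_pi_pi]
  have h1 : ∀ i : Fin d, volume (Ico ((n i : ℝ) * 2 ^ k) (((n i : ℝ) + 1) * 2 ^ k))
      = ENNReal.ofReal ((2:ℝ) ^ k) := by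
    intro i
    rw [Real.volume_Ico]
    congr 1
    ring
  simp_rw [h1]
  rw [Finset.prod_const, Finset.card_univ, Fintype.card_fin, ← tp_intCast,
    ← ENNReal.rpow_natCast (tp k) d, tp_rpow]

lemma counting {d : ℕ} {r : ℝ} (a : Idx d) :
    ∑' b : Idx d, (if Sub b a then tp ((b.1 : ℝ) * d * r) else 0)
      ≤ (1 - tp (d * (1 - r)))⁻¹ * tp ((a.1 : ℝ) * d * r) := by
  classical
  rw [ENNReal.tsum_prod']
  have inner : ∀ k : ℤ, (∑' n : Fin d → ℤ, if Sub (k, n) a then tp ((k:ℝ) * d * r) else 0)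
      = if k ≤ a.1 then ((2:ℝ≥0∞) ^ ((a.1 - k).toNat * d)) * tp ((k:ℝ) * d * r) else 0 := by
    intro k
    by_cases hk : k ≤ a.1
    · rw [if_pos hk]
      set j : ℕ := (a.1 - k).toNat with hj
      set B : Finset (Fin d → ℤ) :=
        Fintype.piFinset (fun i => Finset.Ico (a.2 i * 2 ^ j) ((a.2 i + 1) * 2 ^ j)) with hB
      have hmem : ∀ n : Fin d → ℤ, Sub (k, n) a ↔ n ∈ B := by
        intro n
        rw [hB, Fintype.mem_piFinset]
        constructor
        · intro h i
          rw [Finset.mem_Ico]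
          exact ⟨(h.2 i).1, (h.2 i).2⟩
        · intro h
          exact ⟨hk, fun i => Finset.mem_Ico.1 (h i)⟩
      rw [tsum_eq_sum (s := B) (fun n hn => if_neg fun hS => hn ((hmem n).1 hS)),
        Finset.sum_congr rfl fun n hn => if_pos ((hmem n).2 hn), Finset.sum_const,
        nsmul_eq_mul]
      congr 1
      have hcard : B.card = 2 ^ (j * d) := by
        rw [hB, Fintype.card_piFinset]
        have hI : ∀ i : Fin d, (Finset.Ico (a.2 i * 2 ^ j) ((a.2 i + 1) * 2 ^ j)).card = 2 ^ j := by
          intro i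
          rw [Int.card_Ico]
          have h2 : (a.2 i + 1) * 2 ^ j - a.2 i * 2 ^ j = ((2 ^ j : ℕ) : ℤ) := by push_cast; ring
          rw [h2, Int.toNat_natCast]
        simp_rw [hI]
        rw [Finset.prod_const, Finset.card_univ, Fintype.card_fin, ← pow_mul]
      rw [hcard]
      norm_cast
    · rw [if_neg hk]
      have hno : ∀ n : Fin d → ℤ, ¬ Sub (k, n) a := fun n h => hk h.1
      simp [hno]
  rw [tsum_congr inner]
  set φ : ℕ → ℤ := fun m => a.1 - m with hφdef
  have hφ : Injective φ := by
    intro x y h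
    simp only [hφdef] at h
    omega
  have hsupp : support (fun k : ℤ => if k ≤ a.1 then
      ((2:ℝ≥0∞) ^ ((a.1 - k).toNat * d)) * tp ((k:ℝ) * d * r) else 0) ⊆ range φ := by
    intro k hk
    by_cases h : k ≤ a.1
    · exact ⟨(a.1 - k).toNat, by simp only [hφdef]; omega⟩
    · simp only [mem_support, if_neg h, ne_eq, not_true_eq_false] at hk
  rw [← hφ.tsum_eq hsupp]
  have hterm : ∀ m : ℕ, (if φ m ≤ a.1 then
        ((2:ℝ≥0∞) ^ ((a.1 - φ m).toNat * d)) * tp ((φ m : ℝ) * d * r) else 0)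
      = tp ((a.1:ℝ) * d * r) * (tp (d * (1 - r))) ^ m := by
    intro m
    have h1 : φ m ≤ a.1 := by simp only [hφdef]; omega
    have h2 : (a.1 - φ m).toNat = m := by simp only [hφdef]; omega
    rw [if_pos h1, h2]
    have h3 : ((2:ℝ≥0∞) ^ (m * d)) = tp ((m : ℝ) * (d:ℝ)) := by
      rw [tp, ← ENNReal.rpow_natCast 2 (m * d)]
      push_cast
      ring_nf
    have h4 : (tp (d * (1 - r))) ^ m = tp (d * (1 - r) * m) := by
      rw [← ENNReal.rpow_natCast (tp _) m, tp_rpow]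
    have h5 : (φ m : ℝ) = (a.1 : ℝ) - m := by
      simp only [hφdef]
      push_cast
      ring
    rw [h3, h4, ← tp_add, ← tp_add, h5]
    congr 1
    ring
  rw [tsum_congr hterm, ENNReal.tsum_mul_left, ENNReal.tsum_geometric, mul_comm]

section Stopping

variable {d : ℕ} {p r : ℝ} {F : EuclideanSpace ℝ (Fin d) → ℝ≥0∞} {T : ℝ≥0∞}

/-- Hölder bound for the cube integrals. -/
lemma A_le (hp : 1 < p) (hF : Measurable F) (q : Idx d) :
    ∫⁻ x in dyadicCube d q.1 q.2, F x
      ≤ (∫⁻ x, F x ^ p) ^ (1/p) * (tp ((q.1:ℝ) * d)) ^ (1 - 1/p) := by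
  have := holder_set (μ := volume) hp hF (measurableSet_cube q.1 q.2)
  rwa [volume_cube] at this

lemma A_ne_top (hp : 1 < p) (hF : Measurable F) (hM : ∫⁻ x, F x ^ p ≠ ∞) (q : Idx d) :
    ∫⁻ x in dyadicCube d q.1 q.2, F x ≠ ∞ := by
  refine ne_top_of_le_ne_top ?_ (A_le hp hF q)
  exact ENNReal.mul_ne_top (ENNReal.rpow_ne_top_of_nonneg (by positivity) hM)
    (by rw [tp_rpow]; exact tp_ne_top _)

/-- Scale bound: cubes with large average have bounded scale. -/
lemma scale_bound (hd : 1 ≤ d) (hp : 1 < p) (hF : Measurable F)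
    (hM : ∫⁻ x, F x ^ p ≠ ∞) (hT0 : T ≠ 0) (hTtop : T ≠ ∞) :
    ∃ K : ℤ, ∀ q : Idx d,
      T * tp ((q.1:ℝ) * d) < ∫⁻ x in dyadicCube d q.1 q.2, F x → q.1 ≤ K := by
  have hp0 : (0:ℝ) < p := by linarith
  set M := ∫⁻ x, F x ^ p with hMdef
  have hBne : M * (T⁻¹) ^ p ≠ ∞ :=
    ENNReal.mul_ne_top hM (ENNReal.rpow_ne_top_of_nonneg hp0.le (ENNReal.inv_ne_top.2 hT0))
  obtain ⟨nn, hnn⟩ := ENNReal.exists_nat_gt hBne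
  refine ⟨nn, fun q hq => ?_⟩
  set k := q.1 with hk
  -- step 1 : T * tp (k*d*(1/p)) < M^(1/p)
  have h1 : T * tp ((k:ℝ) * d) < M ^ (1/p) * tp ((k:ℝ) * d * (1 - 1/p)) := by
    refine lt_of_lt_of_le hq ?_
    have := A_le hp hF q
    rwa [tp_rpow] at this
  have h1' : T * tp ((k:ℝ) * d * (1/p)) * tp ((k:ℝ) * d * (1 - 1/p))
      < M ^ (1/p) * tp ((k:ℝ) * d * (1 - 1/p)) := by
    rw [mul_assoc, ← tp_add, show (k:ℝ) * d * (1/p) + (k:ℝ) * d * (1 - 1/p) = (k:ℝ) * d by ring]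
    exact h1
  have h2 : T * tp ((k:ℝ) * d * (1/p)) < M ^ (1/p) :=
    (ENNReal.mul_left_strictMono (tp_ne_zero _) (tp_ne_top _)).lt_iff_lt.1 h1'
  -- raise to p
  have h3 : (T * tp ((k:ℝ) * d * (1/p))) ^ p < (M ^ (1/p)) ^ p :=
    ENNReal.rpow_lt_rpow h2 hp0
  rw [ENNReal.mul_rpow_of_nonneg _ _ hp0.le, tp_rpow, ← ENNReal.rpow_mul,
    one_div_mul_cancel (by linarith : p ≠ 0), ENNReal.rpow_one] at h3
  have hexp : (k:ℝ) * d * (1/p) * p = (k:ℝ) * d := by field_simp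
  rw [hexp] at h3
  -- tp(kd) < M * (T⁻¹)^p
  have h4 : tp ((k:ℝ) * d) < M * (T⁻¹) ^ p := by
    have hc0 : ((T⁻¹) ^ p : ℝ≥0∞) ≠ 0 := by
      simp [ENNReal.rpow_eq_zero_iff, ENNReal.inv_eq_zero, ENNReal.inv_eq_top, hT0, hTtop]
    have hctop : ((T⁻¹) ^ p : ℝ≥0∞) ≠ ∞ :=
      ENNReal.rpow_ne_top_of_nonneg hp0.le (ENNReal.inv_ne_top.2 hT0)
    calc tp ((k:ℝ) * d) = (T ^ p * tp ((k:ℝ) * d)) * (T⁻¹) ^ p := by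
          rw [mul_comm (T ^ p), mul_assoc, ← ENNReal.mul_rpow_of_nonneg _ _ hp0.le,
            ENNReal.mul_inv_cancel hT0 hTtop, ENNReal.one_rpow, mul_one]
      _ < M * (T⁻¹) ^ p := ENNReal.mul_lt_mul_left hc0 hctop h3
  -- tp(kd) < tp(nn)
  have h5 : tp ((k:ℝ) * d) < tp nn := by
    refine lt_of_lt_of_le (lt_trans h4 hnn) ?_
    have : ((nn : ℕ) : ℝ≥0∞) ≤ (2:ℝ≥0∞) ^ (nn : ℕ) := by
      have := Nat.lt_two_pow_self (n := nn)
      exact_mod_cast this.le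
    rwa [← ENNReal.rpow_natCast 2 nn] at this
  -- conclude
  have h6 : (k:ℝ) * d < nn := by
    by_contra h
    push_neg at h
    exact absurd (ENNReal.rpow_le_rpow_of_exponent_le (by norm_num) h) (not_le.2 h5)
  have h7 : k * (d:ℤ) < (nn:ℤ) := by exact_mod_cast h6
  rcases le_or_gt k 0 with h | h
  · omega
  · have : k * 1 ≤ k * d := by
      refine mul_le_mul_of_nonneg_left ?_ h.le
      exact_mod_cast hd
    omega

end Stopping

section Nbound

variable {d : ℕ} {p r : ℝ} {F : EuclideanSpace ℝ (Fin d) → ℝ≥0∞} {T : ℝ≥0∞}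

set_option maxHeartbeats 1000000 in
/-- The core stopping-time estimate. -/
lemma Nbound (hd : 1 ≤ d) (hp : 1 < p) (hr : 1 < r) (hF : Measurable F)
    (hM : ∫⁻ x, F x ^ p ≠ ∞) (hT0 : T ≠ 0) (hTtop : T ≠ ∞) :
    ∑' q : Idx d, (if T * tp ((q.1:ℝ) * d) < ∫⁻ x in dyadicCube d q.1 q.2, F x
        then tp ((q.1:ℝ) * d * r) else 0)
      ≤ (1 - tp ((d:ℝ) * (1 - r)))⁻¹
          * ((2:ℝ≥0∞) ^ p * (∫⁻ x, F x ^ p) * (T⁻¹) ^ p) ^ (r - 1)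
          * (2 * T⁻¹ * ∫⁻ x, (if T < 2 * F x then F x else 0)) := by
  have hp0 : (0:ℝ) < p := by linarith
  set M := ∫⁻ x, F x ^ p with hMdef
  set C : Idx d → Prop := fun q => T * tp ((q.1:ℝ) * d) < ∫⁻ x in dyadicCube d q.1 q.2, F x
    with hCdef
  obtain ⟨K, hK⟩ := scale_bound hd hp hF hM hT0 hTtop
  -- maximal ancestors
  have exists_top : ∀ q : Idx d, C q → ∃ b : Idx d, Sub q b ∧ C b ∧
      (∀ l : ℤ, b.1 ≤ l → C (anc b l) → l = b.1) := by
    intro q hq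
    obtain ⟨L, ⟨hL1, hL2⟩, hLmax⟩ := Int.exists_greatest_of_bdd
      (P := fun z => q.1 ≤ z ∧ C (anc q z))
      ⟨K, fun z hz => hK _ hz.2⟩
      ⟨q.1, le_refl _, by rw [anc_self]; exact hq⟩
    refine ⟨anc q L, sub_anc q hL1, hL2, ?_⟩
    intro l hl hCl
    have heq : anc (anc q L) l = anc q l := anc_anc q hl
    rw [heq] at hCl
    exact le_antisymm (hLmax l ⟨le_trans hL1 hl, hCl⟩) hl
  choose top htop1 htop2 htop3 using exists_top
  set isMax : Idx d → Prop := fun b => C b ∧ ∀ l : ℤ, b.1 ≤ l → C (anc b l) → l = b.1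
    with hisMax
  have htopMax : ∀ q hq, isMax (top q hq) := fun q hq => ⟨htop2 q hq, htop3 q hq⟩
  -- disjointness of maximal cubes
  have hkey : ∀ a b : Idx d, isMax a → isMax b → a.1 ≤ b.1 →
      ¬ Disjoint (dyadicCube d a.1 a.2) (dyadicCube d b.1 b.2) → a = b := by
    intro a b hma hmb hab hnd
    obtain ⟨x, hxa, hxb⟩ := Set.not_disjoint_iff.1 hnd
    have hsub : Sub a b := sub_of_mem_mem hab hxa hxb
    have hbase : basePt a ∈ dyadicCube d b.1 b.2 := hsub.subset (basePt_mem a)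
    have hanc : anc a b.1 = b := by rw [anc_eq_of_mem hbase]
    have hle : b.1 = a.1 := hma.2 b.1 hab (by rw [hanc]; exact hmb.1)
    rw [← hanc, hle, anc_self]
  have hdisj : ∀ a b : Idx d, isMax a → isMax b → a ≠ b →
      Disjoint (dyadicCube d a.1 a.2) (dyadicCube d b.1 b.2) := by
    intro a b hma hmb hab
    by_contra hnd
    rcases le_total a.1 b.1 with h | h
    · exact hab (hkey a b hma hmb h hnd)
    · exact hab (hkey b a hmb hma h fun hD => hnd hD.symm).symm
  -- volume bound for cubes satisfying C
  set G : EuclideanSpace ℝ (Fin d) → ℝ≥0∞ := fun x => if T < 2 * F x then F x else 0 with hGdef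
  have hGm : Measurable G :=
    Measurable.ite (measurableSet_lt measurable_const (hF.const_mul 2)) hF measurable_const
  have hvol : ∀ b : Idx d, C b →
      tp ((b.1:ℝ) * d) ≤ 2 * T⁻¹ * ∫⁻ x in dyadicCube d b.1 b.2, G x := by
    intro b hb
    set V := tp ((b.1:ℝ) * d) with hV
    have hpt : ∀ x, F x ≤ G x + T / 2 := by
      intro x
      by_cases h : T < 2 * F x
      · rw [hGdef]; simp only [if_pos h]; exact le_self_add
      · rw [hGdef]; simp only [if_neg h, zero_add]
        push_neg at h
        exact (ENNReal.le_div_iff_mul_le (Or.inl two_ne_zero) (Or.inl ENNReal.ofNat_ne_top)).2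
          (by rwa [mul_comm] at h)
    have hsplit : ∫⁻ x in dyadicCube d b.1 b.2, F x
        ≤ (∫⁻ x in dyadicCube d b.1 b.2, G x) + T / 2 * V := by
      calc ∫⁻ x in dyadicCube d b.1 b.2, F x
          ≤ ∫⁻ x in dyadicCube d b.1 b.2, (G x + T / 2) := lintegral_mono hpt
        _ = (∫⁻ x in dyadicCube d b.1 b.2, G x) + T / 2 * volume (dyadicCube d b.1 b.2) := by
            rw [lintegral_add_right _ measurable_const, setLIntegral_const]
        _ = _ := by rw [volume_cube]
    have h2 : T * V < (∫⁻ x in dyadicCube d b.1 b.2, G x) + T / 2 * V :=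
      lt_of_lt_of_le hb hsplit
    have h3 : T / 2 * V + T / 2 * V = T * V := by
      rw [← add_mul, ENNReal.add_halves]
    have h4 : T / 2 * V < ∫⁻ x in dyadicCube d b.1 b.2, G x := by
      rw [← h3] at h2
      exact (ENNReal.add_lt_add_iff_right
        (ENNReal.mul_ne_top (ENNReal.div_lt_top hTtop two_ne_zero).ne (tp_ne_top _))).1 h2
    calc V = 2 * T⁻¹ * (T / 2 * V) := by
          rw [div_eq_mul_inv]
          calc V = (T⁻¹ * T) * (2 * 2⁻¹) * V := by
                rw [ENNReal.inv_mul_cancel hT0 hTtop,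
                  ENNReal.mul_inv_cancel two_ne_zero ENNReal.ofNat_ne_top, one_mul, one_mul]
            _ = 2 * T⁻¹ * (T * 2⁻¹ * V) := by ring
      _ ≤ 2 * T⁻¹ * ∫⁻ x in dyadicCube d b.1 b.2, G x := mul_le_mul_right h4.le _
  -- Step A : regroup under maximal cubes
  have stepA : ∑' q : Idx d, (if C q then tp ((q.1:ℝ) * d * r) else 0)
      ≤ ∑' pr : Idx d × Idx d,
          (if isMax pr.1 ∧ Sub pr.2 pr.1 then tp ((pr.2.1:ℝ) * d * r) else 0) := by
    set h : Idx d × Idx d → ℝ≥0∞ := fun pr =>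
      if isMax pr.1 ∧ Sub pr.2 pr.1 then tp ((pr.2.1:ℝ) * d * r) else 0 with hh
    set ψ : Idx d → Idx d × Idx d := fun q =>
      if hq : C q then (top q hq, q) else (q, q) with hψdef
    have hsnd : ∀ q, (ψ q).2 = q := by
      intro q
      by_cases hq : C q <;> simp [hψdef, hq]
    have hψ : Injective ψ := fun a b hab => by
      rw [← hsnd a, ← hsnd b, hab]
    calc ∑' q : Idx d, (if C q then tp ((q.1:ℝ) * d * r) else 0)
        ≤ ∑' q : Idx d, h (ψ q) := by
          refine Summable.tsum_le_tsum (fun q => ?_) ENNReal.summable ENNReal.summable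
          by_cases hq : C q
          · rw [if_pos hq, hψdef]
            simp only [dif_pos hq, hh]
            rw [if_pos ⟨htopMax q hq, htop1 q hq⟩]
          · rw [if_neg hq]
            exact zero_le
      _ ≤ ∑' pr : Idx d × Idx d, h pr := tsum_comp_le_tsum_of_injective hψ h
  -- Step B : counting inside each maximal cube
  have stepB : ∑' pr : Idx d × Idx d,
        (if isMax pr.1 ∧ Sub pr.2 pr.1 then tp ((pr.2.1:ℝ) * d * r) else 0)
      ≤ ∑' a : Idx d, (if isMax a then
          (1 - tp ((d:ℝ) * (1 - r)))⁻¹ * tp ((a.1:ℝ) * d * r) else 0) := by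
    rw [ENNReal.tsum_prod']
    refine Summable.tsum_le_tsum (fun a => ?_) ENNReal.summable ENNReal.summable
    by_cases hMa : isMax a
    · rw [if_pos hMa]
      have : ∀ b : Idx d, (if isMax a ∧ Sub b a then tp ((b.1:ℝ) * d * r) else 0)
          = (if Sub b a then tp ((b.1:ℝ) * d * r) else 0) := by
        intro b
        by_cases hb : Sub b a
        · rw [if_pos ⟨hMa, hb⟩, if_pos hb]
        · rw [if_neg (fun h => hb h.2), if_neg hb]
      rw [tsum_congr this]
      exact counting a
    · rw [if_neg hMa]
      have : ∀ b : Idx d, (if isMax a ∧ Sub b a then tp ((b.1:ℝ) * d * r) else 0) = 0 :=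
        fun b => if_neg (fun h => hMa h.1)
      rw [tsum_congr this]
      simp
  -- Step C : sum over maximal cubes, power trick
  set Vsum : ℝ≥0∞ := ∑' a : Idx d, (if isMax a then tp ((a.1:ℝ) * d) else 0) with hVsum
  have stepC : ∑' a : Idx d, (if isMax a then
        (1 - tp ((d:ℝ) * (1 - r)))⁻¹ * tp ((a.1:ℝ) * d * r) else 0)
      ≤ (1 - tp ((d:ℝ) * (1 - r)))⁻¹ * Vsum ^ r := by
    have h1 : ∀ a : Idx d, (if isMax a then
          (1 - tp ((d:ℝ) * (1 - r)))⁻¹ * tp ((a.1:ℝ) * d * r) else 0)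
        = (1 - tp ((d:ℝ) * (1 - r)))⁻¹ * (if isMax a then tp ((a.1:ℝ) * d) else 0) ^ r := by
      intro a
      by_cases hMa : isMax a
      · rw [if_pos hMa, if_pos hMa, tp_rpow]
      · rw [if_neg hMa, if_neg hMa, ENNReal.zero_rpow_of_pos (by linarith), mul_zero]
    rw [tsum_congr h1, ENNReal.tsum_mul_left]
    exact mul_le_mul_right (tsum_rpow_le _ hr.le) _
  -- Step D : Vsum ≤ 2 T⁻¹ ∫ G
  have stepD : Vsum ≤ 2 * T⁻¹ * ∫⁻ x, G x := by
    have h1 : Vsum ≤ ∑' a : Idx d, (if isMax a then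
        2 * T⁻¹ * ∫⁻ x in dyadicCube d a.1 a.2, G x else 0) := by
      refine Summable.tsum_le_tsum (fun a => ?_) ENNReal.summable ENNReal.summable
      by_cases hMa : isMax a
      · rw [if_pos hMa, if_pos hMa]; exact hvol a hMa.1
      · rw [if_neg hMa, if_neg hMa]
    have h2 : ∀ a : Idx d, (if isMax a then
          2 * T⁻¹ * ∫⁻ x in dyadicCube d a.1 a.2, G x else 0)
        = 2 * T⁻¹ * (if isMax a then ∫⁻ x in dyadicCube d a.1 a.2, G x else 0) := by
      intro a; by_cases hMa : isMax a <;> simp [hMa]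
    rw [tsum_congr h2, ENNReal.tsum_mul_left] at h1
    refine le_trans h1 (mul_le_mul_right ?_ _)
    have h3 : ∑' a : Idx d, (if isMax a then ∫⁻ x in dyadicCube d a.1 a.2, G x else 0)
        = ∑' a : ({a : Idx d | isMax a} : Set (Idx d)),
            ∫⁻ x in dyadicCube d (a : Idx d).1 (a : Idx d).2, G x :=
      ((tsum_subtype ({a : Idx d | isMax a})
          (fun b => ∫⁻ x in dyadicCube d b.1 b.2, G x)).trans
        (tsum_congr fun a => by rw [Set.indicator_apply]; simp only [Set.mem_setOf_eq])).symm
    calc ∑' a : Idx d, (if isMax a then ∫⁻ x in dyadicCube d a.1 a.2, G x else 0)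
        = ∑' a : ({a : Idx d | isMax a} : Set (Idx d)),
            ∫⁻ x in dyadicCube d (a : Idx d).1 (a : Idx d).2, G x := h3
      _ = ∫⁻ x in ⋃ a : ({a : Idx d | isMax a} : Set (Idx d)),
            dyadicCube d (a : Idx d).1 (a : Idx d).2, G x :=
          (lintegral_iUnion (fun a => measurableSet_cube _ _)
            (fun a b hab => hdisj a.1 b.1 a.2 b.2 (fun h => hab (Subtype.ext h))) G).symm
      _ ≤ ∫⁻ x, G x := setLIntegral_le_lintegral _ _
  -- Step E : Vsum ≤ 2^p M (T⁻¹)^p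
  have hGtot : ∫⁻ x, G x = ∫⁻ x in {x | T < 2 * F x}, F x := by
    rw [← lintegral_indicator (measurableSet_lt measurable_const (hF.const_mul 2))]
    exact lintegral_congr fun x => by rw [Set.indicator_apply]; rfl
  have stepE : Vsum ≤ (2:ℝ≥0∞) ^ p * M * (T⁻¹) ^ p := by
    have he0 : (0:ℝ) ≤ 1 - 1/p := by
      rw [sub_nonneg]
      exact div_le_one_of_le₀ hp.le (by linarith)
    have hSt : volume {x | T < 2 * F x} ≤ (T⁻¹) ^ p * ((2:ℝ≥0∞) ^ p * M) := by
      have hch := cheb (μ := volume) hp0 hF T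
      have hc0 : ((T⁻¹) ^ p : ℝ≥0∞) ≠ 0 := by
        simp [ENNReal.rpow_eq_zero_iff, ENNReal.inv_eq_zero, ENNReal.inv_eq_top, hT0, hTtop]
      have hctop : ((T⁻¹) ^ p : ℝ≥0∞) ≠ ∞ :=
        ENNReal.rpow_ne_top_of_nonneg hp0.le (ENNReal.inv_ne_top.2 hT0)
      calc volume {x | T < 2 * F x}
          = (T⁻¹) ^ p * (T ^ p * volume {x | T < 2 * F x}) := by
            rw [← mul_assoc, ← ENNReal.mul_rpow_of_nonneg _ _ hp0.le,
              ENNReal.inv_mul_cancel hT0 hTtop, ENNReal.one_rpow, one_mul]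
        _ ≤ (T⁻¹) ^ p * ((2:ℝ≥0∞) ^ p * M) := mul_le_mul_right hch _
    have hhol : ∫⁻ x, G x ≤ M ^ (1/p) * (volume {x | T < 2 * F x}) ^ (1 - 1/p) := by
      rw [hGtot]
      exact holder_set hp hF (measurableSet_lt measurable_const (hF.const_mul 2))
    refine le_trans stepD ?_
    have hmono : ∫⁻ x, G x ≤ M ^ (1/p) * ((T⁻¹) ^ p * ((2:ℝ≥0∞) ^ p * M)) ^ (1 - 1/p) :=
      le_trans hhol (mul_le_mul_right (ENNReal.rpow_le_rpow hSt he0) _)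
    calc 2 * T⁻¹ * ∫⁻ x, G x
        ≤ 2 * T⁻¹ * (M ^ (1/p) * ((T⁻¹) ^ p * ((2:ℝ≥0∞) ^ p * M)) ^ (1 - 1/p)) :=
          mul_le_mul_right hmono _
      _ = (2:ℝ≥0∞) ^ p * M * (T⁻¹) ^ p := by
          rw [ENNReal.mul_rpow_of_nonneg _ _ he0,
            ENNReal.mul_rpow_of_nonneg ((2:ℝ≥0∞)^p) M he0,
            ← ENNReal.rpow_mul, ← ENNReal.rpow_mul]
          have e1 : p * (1 - 1/p) = p - 1 := by field_simp
          rw [e1]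
          have c2 : (2:ℝ≥0∞) * (2:ℝ≥0∞) ^ (p - 1) = (2:ℝ≥0∞) ^ p := by
            nth_rewrite 1 [← ENNReal.rpow_one 2]
            rw [← ENNReal.rpow_add_of_nonneg _ _ zero_le_one (by linarith)]
            norm_num
          have cT : T⁻¹ * (T⁻¹) ^ (p - 1) = (T⁻¹) ^ p := by
            nth_rewrite 1 [← ENNReal.rpow_one T⁻¹]
            rw [← ENNReal.rpow_add_of_nonneg _ _ zero_le_one (by linarith)]
            norm_num
          have cM : M ^ (1/p) * M ^ (1 - 1/p) = M := by
            rw [← ENNReal.rpow_add_of_nonneg _ _ (by positivity) (by positivity)]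
            simp
          calc 2 * T⁻¹ * (M ^ (1/p) * ((T⁻¹) ^ (p - 1) * ((2:ℝ≥0∞) ^ (p-1) * M ^ (1 - 1/p))))
              = (2 * (2:ℝ≥0∞) ^ (p-1)) * (M ^ (1/p) * M ^ (1 - 1/p)) * (T⁻¹ * (T⁻¹) ^ (p-1)) := by
                ring
            _ = (2:ℝ≥0∞) ^ p * M * (T⁻¹) ^ p := by rw [c2, cT, cM]
  -- final chain
  calc ∑' q : Idx d, (if T * tp ((q.1:ℝ) * d) < ∫⁻ x in dyadicCube d q.1 q.2, F x
        then tp ((q.1:ℝ) * d * r) else 0)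
      ≤ (1 - tp ((d:ℝ) * (1 - r)))⁻¹ * Vsum ^ r :=
        le_trans stepA (le_trans stepB stepC)
    _ ≤ (1 - tp ((d:ℝ) * (1 - r)))⁻¹
          * (((2:ℝ≥0∞) ^ p * M * (T⁻¹) ^ p) ^ (r - 1) * (2 * T⁻¹ * ∫⁻ x, G x)) := by
        refine mul_le_mul_right ?_ _
        have hvr : Vsum ^ (r - 1) * Vsum = Vsum ^ r := by
          nth_rewrite 2 [← ENNReal.rpow_one Vsum]
          rw [← ENNReal.rpow_add_of_nonneg _ _ (by linarith) zero_le_one, sub_add_cancel]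
        rw [← hvr]
        exact mul_le_mul (ENNReal.rpow_le_rpow stepE (by linarith)) stepD zero_le zero_le
    _ = (1 - tp ((d:ℝ) * (1 - r)))⁻¹
          * ((2:ℝ≥0∞) ^ p * M * (T⁻¹) ^ p) ^ (r - 1)
          * (2 * T⁻¹ * ∫⁻ x, (if T < 2 * F x then F x else 0)) := by
        rw [← mul_assoc]

end Nbound

section PointwiseT

variable {d : ℕ} {p s : ℝ} {F : EuclideanSpace ℝ (Fin d) → ℝ≥0∞}

set_option maxHeartbeats 1000000 in
lemma pointwise_bound (hd : 1 ≤ d) (hp : 1 < p) (hs : p < s) (hF : Measurable F)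
    (hM : ∫⁻ x, F x ^ p ≠ ∞) {t : ℝ} (ht : 0 < t) :
    ∑' q : Idx d, tp ((q.1:ℝ) * d * (s/p)) *
        ({t' : ℝ | ENNReal.ofReal t' <
            (∫⁻ x in dyadicCube d q.1 q.2, F x) * tp (-((q.1:ℝ) * d))}.indicator
          (fun t'' => ENNReal.ofReal (t'' ^ (s-1))) t)
      ≤ ((1 - tp ((d:ℝ) * (1 - s/p)))⁻¹ * ((2:ℝ≥0∞) ^ p * (∫⁻ x, F x ^ p)) ^ (s/p - 1) * 2)
          * ((ENNReal.ofReal t) ^ (p-2)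
              * ∫⁻ x, (if ENNReal.ofReal t < 2 * F x then F x else 0)) := by
  have hp0 : (0:ℝ) < p := by linarith
  have hr1 : 1 < s/p := (one_lt_div hp0).2 hs
  set r : ℝ := s/p with hrdef
  set T : ℝ≥0∞ := ENNReal.ofReal t with hTdef
  have hT0 : T ≠ 0 := by simp [hTdef, ht]
  have hTtop : T ≠ ∞ := ENNReal.ofReal_ne_top
  set M : ℝ≥0∞ := ∫⁻ x, F x ^ p with hMdef
  set A : Idx d → ℝ≥0∞ := fun q => ∫⁻ x in dyadicCube d q.1 q.2, F x with hAdef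
  have hterm : ∀ q : Idx d,
      tp ((q.1:ℝ) * d * r) *
          ({t' : ℝ | ENNReal.ofReal t' < A q * tp (-((q.1:ℝ) * d))}.indicator
            (fun t'' => ENNReal.ofReal (t'' ^ (s-1))) t)
        = (if T * tp ((q.1:ℝ) * d) < A q then tp ((q.1:ℝ) * d * r) else 0) * T ^ (s-1) := by
    intro q
    rw [Set.indicator_apply]
    have hiff : (t ∈ {t' : ℝ | ENNReal.ofReal t' < A q * tp (-((q.1:ℝ) * d))})
        ↔ (T * tp ((q.1:ℝ) * d) < A q) := by
      rw [Set.mem_setOf_eq, ← hTdef]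
      rw [show tp (-((q.1:ℝ) * d)) = (tp ((q.1:ℝ) * d))⁻¹ by rw [tp, tp, ENNReal.rpow_neg],
        ← div_eq_mul_inv]
      exact ENNReal.lt_div_iff_mul_lt (Or.inl (tp_ne_zero _)) (Or.inl (tp_ne_top _))
    by_cases hc : T * tp ((q.1:ℝ) * d) < A q
    · rw [if_pos (hiff.2 hc), if_pos hc]
      rw [← ENNReal.ofReal_rpow_of_pos ht]
    · rw [if_neg (fun h => hc (hiff.1 h)), if_neg hc, mul_zero, zero_mul]
  rw [tsum_congr hterm, ENNReal.tsum_mul_right]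
  have hN := Nbound (F := F) (T := T) hd hp hr1 hF hM hT0 hTtop
  refine le_trans (mul_le_mul_left hN _) (le_of_eq ?_)
  set Gt : ℝ≥0∞ := ∫⁻ x, (if T < 2 * F x then F x else 0) with hGt
  have hTalg : ((T⁻¹) ^ p) ^ (r-1) * T⁻¹ * T ^ (s-1) = T ^ (p-2) := by
    rw [ENNReal.inv_rpow, ← ENNReal.rpow_neg, ← ENNReal.rpow_mul,
      ← ENNReal.rpow_neg_one T, ← ENNReal.rpow_add _ _ hT0 hTtop,
      ← ENNReal.rpow_add _ _ hT0 hTtop]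
    congr 1
    rw [hrdef]
    field_simp
    ring
  calc (1 - tp ((d:ℝ) * (1 - r)))⁻¹ * ((2:ℝ≥0∞) ^ p * M * (T⁻¹) ^ p) ^ (r - 1)
        * (2 * T⁻¹ * Gt) * T ^ (s-1)
      = (1 - tp ((d:ℝ) * (1 - r)))⁻¹ * (((2:ℝ≥0∞) ^ p * M) ^ (r-1) * ((T⁻¹) ^ p) ^ (r-1))
        * (2 * T⁻¹ * Gt) * T ^ (s-1) := by
        rw [ENNReal.mul_rpow_of_nonneg _ _ (by linarith : (0:ℝ) ≤ r - 1)]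
    _ = ((1 - tp ((d:ℝ) * (1 - r)))⁻¹ * ((2:ℝ≥0∞) ^ p * M) ^ (r-1) * 2)
        * ((((T⁻¹) ^ p) ^ (r-1) * T⁻¹ * T ^ (s-1)) * Gt) := by ring
    _ = ((1 - tp ((d:ℝ) * (1 - r)))⁻¹ * ((2:ℝ≥0∞) ^ p * M) ^ (r-1) * 2)
        * (T ^ (p-2) * Gt) := by rw [hTalg]

end PointwiseT

section Jcomp

variable {d : ℕ} {p : ℝ} {F : EuclideanSpace ℝ (Fin d) → ℝ≥0∞}

set_option maxHeartbeats 1000000 in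
lemma Jcomp (hp : 1 < p) (hF : Measurable F) (hFfin : ∀ x, F x ≠ ∞) :
    ∫⁻ t in Ioi (0:ℝ), ((ENNReal.ofReal t) ^ (p-2)
        * ∫⁻ x, (if ENNReal.ofReal t < 2 * F x then F x else 0))
      = ENNReal.ofReal (1/(p-1)) * ((2:ℝ≥0∞) ^ (p-1) * ∫⁻ x, F x ^ p) := by
  have hp0 : (0:ℝ) < p := by linarith
  set Ψ : ℝ → EuclideanSpace ℝ (Fin d) → ℝ≥0∞ := fun t x =>
    F x * ({t' : ℝ | ENNReal.ofReal t' < 2 * F x}.indicator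
      (fun t'' => ENNReal.ofReal (t'' ^ (p-2))) t) with hΨ
  have hstep1 : ∫⁻ t in Ioi (0:ℝ), ((ENNReal.ofReal t) ^ (p-2)
      * ∫⁻ x, (if ENNReal.ofReal t < 2 * F x then F x else 0))
      = ∫⁻ t in Ioi (0:ℝ), ∫⁻ x, Ψ t x := by
    refine setLIntegral_congr_fun measurableSet_Ioi ?_
    intro t (ht : (0:ℝ) < t); beta_reduce
    have hne : ((ENNReal.ofReal t) ^ (p-2) : ℝ≥0∞) ≠ ∞ := by
      simp [ENNReal.rpow_eq_top_iff, ENNReal.ofReal_eq_zero, not_le.2 ht, ENNReal.ofReal_ne_top]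
    rw [← lintegral_const_mul' _ _ hne]
    refine lintegral_congr fun x => ?_
    simp only [hΨ, Set.indicator_apply, Set.mem_setOf_eq]
    by_cases hc : ENNReal.ofReal t < 2 * F x
    · rw [if_pos hc, if_pos hc, ← ENNReal.ofReal_rpow_of_pos ht, mul_comm]
    · rw [if_neg hc, if_neg hc, mul_zero, mul_zero]
  rw [hstep1]
  have hmeas : AEMeasurable (uncurry Ψ) ((volume.restrict (Ioi (0:ℝ))).prod volume) := by
    refine Measurable.aemeasurable ?_
    have h1 : Measurable fun z : ℝ × EuclideanSpace ℝ (Fin d) => F z.2 := hF.comp measurable_snd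
    have hset : MeasurableSet {z : ℝ × EuclideanSpace ℝ (Fin d) | ENNReal.ofReal z.1 < 2 * F z.2} :=
      measurableSet_lt (ENNReal.measurable_ofReal.comp measurable_fst) (h1.const_mul 2)
    have h2 : Measurable fun z : ℝ × EuclideanSpace ℝ (Fin d) => ENNReal.ofReal (z.1 ^ (p-2)) :=
      ENNReal.measurable_ofReal.comp ((measurable_fst).pow measurable_const)
    have h3 : (uncurry Ψ) = fun z : ℝ × EuclideanSpace ℝ (Fin d) =>
        F z.2 * (if ENNReal.ofReal z.1 < 2 * F z.2 then ENNReal.ofReal (z.1 ^ (p-2)) else 0) := by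
      funext z
      simp only [uncurry, hΨ, Set.indicator_apply, Set.mem_setOf_eq]
    rw [h3]
    exact h1.mul (Measurable.ite hset h2 measurable_const)
  rw [lintegral_lintegral_swap hmeas]
  have hinner : ∀ x, (∫⁻ t in Ioi (0:ℝ), Ψ t x)
      = (ENNReal.ofReal (1/(p-1)) * (2:ℝ≥0∞) ^ (p-1)) * F x ^ p := by
    intro x
    simp only [hΨ]
    rw [lintegral_const_mul' _ _ (hFfin x),
      layer (by linarith : (-1:ℝ) < p - 2)
        (by exact ENNReal.mul_ne_top ENNReal.ofNat_ne_top (hFfin x)), show p - 2 + 1 = p - 1 by ring]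
    rw [ENNReal.mul_rpow_of_ne_top ENNReal.ofNat_ne_top (hFfin x)]
    rcases eq_or_ne (F x) 0 with h0 | h0
    · rw [h0]
      rw [ENNReal.zero_rpow_of_pos (by linarith : (0:ℝ) < p - 1),
        ENNReal.zero_rpow_of_pos hp0, mul_zero, zero_mul, mul_zero]
    · have hFp : F x * F x ^ (p-1) = F x ^ p := by
        nth_rewrite 1 [← ENNReal.rpow_one (F x)]
        rw [← ENNReal.rpow_add _ _ h0 (hFfin x)]
        norm_num
      calc F x * ((2:ℝ≥0∞) ^ (p-1) * F x ^ (p-1) * ENNReal.ofReal (1/(p-1)))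
          = (ENNReal.ofReal (1/(p-1)) * (2:ℝ≥0∞) ^ (p-1)) * (F x * F x ^ (p-1)) := by ring
        _ = _ := by rw [hFp]
  rw [lintegral_congr hinner, lintegral_const_mul' _ _
    (ENNReal.mul_ne_top ENNReal.ofReal_ne_top
      (ENNReal.rpow_ne_top_of_nonneg (by linarith) ENNReal.ofNat_ne_top)), mul_assoc]

end Jcomp

set_option maxHeartbeats 1000000 in
lemma tsum_layer {d : ℕ} {w : Idx d → ℝ≥0∞} (hw : ∀ q, w q ≠ ∞)
    {u : Idx d → ℝ≥0∞} (hu : ∀ q, u q ≠ ∞) {s : ℝ} (hs1 : 1 < s) :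
    ∑' q : Idx d, w q * u q ^ s
      = ENNReal.ofReal s * ∫⁻ t in Ioi (0:ℝ), ∑' q : Idx d,
          w q * ({t' : ℝ | ENNReal.ofReal t' < u q}.indicator
            (fun t'' => ENNReal.ofReal (t'' ^ (s-1))) t) := by
  have hs0 : (0:ℝ) < s := by linarith
  have hmeas : ∀ q : Idx d, AEMeasurable (fun t : ℝ =>
      w q * ({t' : ℝ | ENNReal.ofReal t' < u q}.indicator
        (fun t'' => ENNReal.ofReal (t'' ^ (s-1))) t)) (volume.restrict (Ioi (0:ℝ))) := by
    intro q
    have hset : MeasurableSet {t' : ℝ | ENNReal.ofReal t' < u q} :=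
      ENNReal.measurable_ofReal (measurableSet_Iio (a := u q))
    exact ((Measurable.indicator
      (ENNReal.measurable_ofReal.comp (measurable_id.pow measurable_const)) hset).const_mul
        (w q)).aemeasurable
  have hper : ∀ q : Idx d, w q * u q ^ s
      = ENNReal.ofReal s * ∫⁻ t in Ioi (0:ℝ),
          w q * ({t' : ℝ | ENNReal.ofReal t' < u q}.indicator
            (fun t'' => ENNReal.ofReal (t'' ^ (s-1))) t) := by
    intro q
    rw [lintegral_const_mul' _ _ (hw q), layer (by linarith : (-1:ℝ) < s - 1) (hu q),
      show s - 1 + 1 = s by ring]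
    calc w q * u q ^ s
        = (ENNReal.ofReal s * ENNReal.ofReal (1/s)) * (w q * u q ^ s) := by
          rw [← ENNReal.ofReal_mul hs0.le, mul_one_div_cancel hs0.ne', ENNReal.ofReal_one,
            one_mul]
      _ = ENNReal.ofReal s * (w q * (u q ^ s * ENNReal.ofReal (1/s))) := by ring
  rw [tsum_congr hper, ENNReal.tsum_mul_left, ← lintegral_tsum hmeas]

end DyadicPf

open DyadicPf in
set_option maxHeartbeats 2000000 in
/-- For every `s > p > 1` there is `C = C(s,p,d)` so that for every
nonnegative `f ∈ L^p(ℝ^d)`,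
`(∑_Q |Q|^{s/p - s} ‖f‖_{L¹(Q)}^s)^{1/s} ≤ C ‖f‖_{L^p(ℝ^d)}`,
the sum over all dyadic cubes `Q`. -/
theorem dyadic_cube_lone_sum_bound (d : ℕ) (hd : 1 ≤ d) (s p : ℝ)
    (hp : 1 < p) (hs : p < s) :
    ∃ C : ℝ≥0∞, C ≠ ∞ ∧
      ∀ f : EuclideanSpace ℝ (Fin d) → ℝ, (∀ x, 0 ≤ f x) →
        MemLp f (ENNReal.ofReal p) (volume : Measure (EuclideanSpace ℝ (Fin d))) →
        (∑' q : ℤ × (Fin d → ℤ),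
            ((2 : ℝ≥0∞) ^ (q.1 * d)) ^ (s / p - s)
              * (∫⁻ x in dyadicCube d q.1 q.2, ENNReal.ofReal (f x)) ^ s) ^ (1 / s)
          ≤ C * eLpNorm f (ENNReal.ofReal p) volume := by
  classical
  have hp0 : (0:ℝ) < p := by linarith
  have hs0 : (0:ℝ) < s := by linarith
  have hs1 : (1:ℝ) < s := by linarith
  have hr1 : 1 < s / p := (one_lt_div hp0).2 hs
  have hrm : (0:ℝ) ≤ s / p - 1 := by linarith
  set c₁ : ℝ≥0∞ := (1 - tp ((d:ℝ) * (1 - s/p)))⁻¹ with hc₁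
  have hc₁top : c₁ ≠ ∞ := by
    rw [hc₁, Ne, ENNReal.inv_eq_top, tsub_eq_zero_iff_le, not_le]
    refine tp_lt_one ?_
    have hd0 : (0:ℝ) < d := by exact_mod_cast hd
    nlinarith
  set C₀ : ℝ≥0∞ := ENNReal.ofReal s * c₁ * ((2:ℝ≥0∞) ^ p) ^ (s/p - 1) * 2
      * (ENNReal.ofReal (1/(p-1)) * (2:ℝ≥0∞) ^ (p-1)) with hC₀
  have hC₀top : C₀ ≠ ∞ := by
    rw [hC₀]
    refine ENNReal.mul_ne_top (ENNReal.mul_ne_top (ENNReal.mul_ne_top (ENNReal.mul_ne_top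
      ENNReal.ofReal_ne_top hc₁top) ?_) ENNReal.ofNat_ne_top)
      (ENNReal.mul_ne_top ENNReal.ofReal_ne_top ?_)
    · exact ENNReal.rpow_ne_top_of_nonneg hrm
        (ENNReal.rpow_ne_top_of_nonneg hp0.le ENNReal.ofNat_ne_top)
    · exact ENNReal.rpow_ne_top_of_nonneg (by linarith) ENNReal.ofNat_ne_top
  refine ⟨C₀ ^ (1/s), ENNReal.rpow_ne_top_of_nonneg (by positivity) hC₀top, ?_⟩
  intro f hf0 hmem
  have hfm := hmem.1
  set g : EuclideanSpace ℝ (Fin d) → ℝ := hfm.mk f with hg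
  have hgm : StronglyMeasurable g := hfm.stronglyMeasurable_mk
  have hfg : f =ᵐ[volume] g := hfm.ae_eq_mk
  set F : EuclideanSpace ℝ (Fin d) → ℝ≥0∞ := fun x => ENNReal.ofReal (g x) with hFdef
  have hFm : Measurable F := ENNReal.measurable_ofReal.comp hgm.measurable
  have hFfin : ∀ x, F x ≠ ∞ := fun x => ENNReal.ofReal_ne_top
  have hFae : (fun x => ENNReal.ofReal (f x)) =ᵐ[volume] F := by
    filter_upwards [hfg] with x hx
    rw [hFdef, hx]
  set M : ℝ≥0∞ := ∫⁻ x, F x ^ p with hM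
  have hMnorm : eLpNorm f (ENNReal.ofReal p) volume = M ^ (1/p) := by
    rw [eLpNorm_eq_lintegral_rpow_enorm_toReal (by simp [ENNReal.ofReal_eq_zero]; linarith)
      ENNReal.ofReal_ne_top, ENNReal.toReal_ofReal hp0.le]
    congr 1
    refine lintegral_congr_ae ?_
    filter_upwards [hfg] with x hx
    rw [Real.enorm_eq_ofReal (hf0 x), hx]
  have hMne : M ≠ ∞ := by
    intro h
    rw [h, ENNReal.top_rpow_of_pos (by positivity)] at hMnorm
    exact absurd hmem.2 (by rw [hMnorm]; exact lt_irrefl _)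
  -- rewrite the sum
  have hA : ∀ q : ℤ × (Fin d → ℤ), ∫⁻ x in dyadicCube d q.1 q.2, ENNReal.ofReal (f x)
      = ∫⁻ x in dyadicCube d q.1 q.2, F x :=
    fun q => lintegral_congr_ae (ae_restrict_of_ae hFae)
  have hufin : ∀ q : Idx d,
      (∫⁻ x in dyadicCube d q.1 q.2, F x) * tp (-((q.1:ℝ) * d)) ≠ ∞ :=
    fun q => ENNReal.mul_ne_top (A_ne_top hp hFm hMne q) (tp_ne_top _)
  have hterm : ∀ q : ℤ × (Fin d → ℤ),
      ((2 : ℝ≥0∞) ^ (q.1 * d)) ^ (s / p - s)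
          * (∫⁻ x in dyadicCube d q.1 q.2, ENNReal.ofReal (f x)) ^ s
        = tp ((q.1:ℝ) * d * (s/p))
          * ((∫⁻ x in dyadicCube d q.1 q.2, F x) * tp (-((q.1:ℝ) * d))) ^ s := by
    intro q
    rw [hA q]
    have e1 : ((2:ℝ≥0∞) ^ (q.1 * (d:ℤ))) ^ (s/p - s) = tp (((q.1 : ℝ) * d) * (s/p - s)) := by
      rw [← ENNReal.rpow_intCast 2 (q.1 * d),
        show (((q.1 * (d:ℤ)) : ℤ) : ℝ) = (q.1:ℝ) * d by push_cast; ring]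
      exact tp_rpow _ _
    have e2 : ((∫⁻ x in dyadicCube d q.1 q.2, F x) * tp (-((q.1:ℝ) * d))) ^ s
        = (∫⁻ x in dyadicCube d q.1 q.2, F x) ^ s * tp (-((q.1:ℝ) * d) * s) := by
      rw [ENNReal.mul_rpow_of_ne_top (A_ne_top hp hFm hMne q) (tp_ne_top _), tp_rpow]
    have e3 : tp (((q.1:ℝ) * d) * (s/p - s))
        = tp ((q.1:ℝ) * d * (s/p)) * tp (-((q.1:ℝ) * d) * s) := by
      rw [← tp_add]
      congr 1
      ring
    rw [e1, e2, e3]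
    ring
  rw [tsum_congr hterm, tsum_layer (fun q => tp_ne_top _) hufin hs1]
  -- bound the t-integral
  set K : ℝ≥0∞ := c₁ * ((2:ℝ≥0∞) ^ p * M) ^ (s/p - 1) * 2 with hK
  have hKtop : K ≠ ∞ := by
    rw [hK]
    exact ENNReal.mul_ne_top (ENNReal.mul_ne_top hc₁top (ENNReal.rpow_ne_top_of_nonneg hrm
      (ENNReal.mul_ne_top (ENNReal.rpow_ne_top_of_nonneg hp0.le ENNReal.ofNat_ne_top) hMne)))
      ENNReal.ofNat_ne_top
  have hIbound : ∫⁻ t in Ioi (0:ℝ), ∑' q : Idx d,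
        tp ((q.1:ℝ) * d * (s/p)) *
          ({t' : ℝ | ENNReal.ofReal t' <
              (∫⁻ x in dyadicCube d q.1 q.2, F x) * tp (-((q.1:ℝ) * d))}.indicator
            (fun t'' => ENNReal.ofReal (t'' ^ (s-1))) t)
      ≤ K * (ENNReal.ofReal (1/(p-1)) * ((2:ℝ≥0∞) ^ (p-1) * M)) := by
    calc ∫⁻ t in Ioi (0:ℝ), ∑' q : Idx d,
          tp ((q.1:ℝ) * d * (s/p)) *
            ({t' : ℝ | ENNReal.ofReal t' <
                (∫⁻ x in dyadicCube d q.1 q.2, F x) * tp (-((q.1:ℝ) * d))}.indicator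
              (fun t'' => ENNReal.ofReal (t'' ^ (s-1))) t)
        ≤ ∫⁻ t in Ioi (0:ℝ), K * ((ENNReal.ofReal t) ^ (p-2)
            * ∫⁻ x, (if ENNReal.ofReal t < 2 * F x then F x else 0)) := by
          refine lintegral_mono_ae ?_
          filter_upwards [ae_restrict_mem measurableSet_Ioi] with t ht
          exact pointwise_bound hd hp hs hFm hMne ht
      _ = K * ∫⁻ t in Ioi (0:ℝ), ((ENNReal.ofReal t) ^ (p-2)
            * ∫⁻ x, (if ENNReal.ofReal t < 2 * F x then F x else 0)) :=
          lintegral_const_mul' _ _ hKtop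
      _ = K * (ENNReal.ofReal (1/(p-1)) * ((2:ℝ≥0∞) ^ (p-1) * M)) := by
          rw [Jcomp hp hFm hFfin]
  -- finish
  have hfinal : ENNReal.ofReal s * ∫⁻ t in Ioi (0:ℝ), ∑' q : Idx d,
        tp ((q.1:ℝ) * d * (s/p)) *
          ({t' : ℝ | ENNReal.ofReal t' <
              (∫⁻ x in dyadicCube d q.1 q.2, F x) * tp (-((q.1:ℝ) * d))}.indicator
            (fun t'' => ENNReal.ofReal (t'' ^ (s-1))) t)
      ≤ C₀ * M ^ (s/p) := by
    refine le_trans (mul_le_mul_right hIbound _) (le_of_eq ?_)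
    rw [hC₀, hK]
    rw [ENNReal.mul_rpow_of_nonneg ((2:ℝ≥0∞)^p) M hrm]
    have hMM : M ^ (s/p - 1) * M = M ^ (s/p) := by
      nth_rewrite 2 [← ENNReal.rpow_one M]
      rw [← ENNReal.rpow_add_of_nonneg _ _ hrm zero_le_one, sub_add_cancel]
    calc ENNReal.ofReal s * (c₁ * (((2:ℝ≥0∞)^p)^(s/p-1) * M^(s/p-1)) * 2
          * (ENNReal.ofReal (1/(p-1)) * ((2:ℝ≥0∞)^(p-1) * M)))
        = (ENNReal.ofReal s * c₁ * ((2:ℝ≥0∞)^p)^(s/p-1) * 2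
            * (ENNReal.ofReal (1/(p-1)) * (2:ℝ≥0∞)^(p-1))) * (M^(s/p-1) * M) := by ring
      _ = _ := by rw [hMM]
  calc (ENNReal.ofReal s * ∫⁻ t in Ioi (0:ℝ), ∑' q : Idx d,
        tp ((q.1:ℝ) * d * (s/p)) *
          ({t' : ℝ | ENNReal.ofReal t' <
              (∫⁻ x in dyadicCube d q.1 q.2, F x) * tp (-((q.1:ℝ) * d))}.indicator
            (fun t'' => ENNReal.ofReal (t'' ^ (s-1))) t)) ^ (1/s)
      ≤ (C₀ * M ^ (s/p)) ^ (1/s) := ENNReal.rpow_le_rpow hfinal (by positivity)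
    _ = C₀ ^ (1/s) * M ^ (1/p) := by
        rw [ENNReal.mul_rpow_of_nonneg _ _ (by positivity : (0:ℝ) ≤ 1/s),
          ← ENNReal.rpow_mul M, show (s/p) * (1/s) = 1/p by field_simp <;> ring]
    _ = C₀ ^ (1/s) * eLpNorm f (ENNReal.ofReal p) volume := by rw [hMnorm]
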